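/- Compatibility of geodesics under reparametrization: for positive definite X, Y and s, u, t in [0,1], one has (X #_s Y) #_t (X #_u Y) = X #_{(1−t)s + tu} Y, where X #_t Y := X^{1/2}(X^{-1/2} Y X^{-1/2})^t X^{1/2}. -/

import Mathlib

open Matrix

/-- Real power of a matrix via the spectral decomposition (defined for Hermitian input). -/
noncomputable def mpow {d : ℕ} (A : Matrix (Fin d) (Fin d) ℝ) (t : ℝ) : Matrix (Fin d) (Fin d) ℝ :=
  if hA : A.IsHermitian then
    (hA.eigenvectorUnitary : Matrix (Fin d) (Fin d) ℝ) *
      Matrix.diagonal (fun i => hA.eigenvalues i ^ t) *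
      star (hA.eigenvectorUnitary : Matrix (Fin d) (Fin d) ℝ)
  else A

/-- The geodesic `X #ₜ Y = X^{1/2} (X^{-1/2} Y X^{-1/2})^t X^{1/2}`. -/
noncomputable def geo {d : ℕ} (X Y : Matrix (Fin d) (Fin d) ℝ) (t : ℝ) : Matrix (Fin d) (Fin d) ℝ :=
  mpow X (1/2) * mpow (mpow X (-(1/2)) * Y * mpow X (-(1/2))) t * mpow X (1/2)

/-- The matrix geometric mean `X # Y`. -/
noncomputable def gmean {d : ℕ} (X Y : Matrix (Fin d) (Fin d) ℝ) : Matrix (Fin d) (Fin d) ℝ :=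
  geo X Y (1/2)

/-!
Write `X #ₐ Y = R Mᵃ R` with `R = X^{1/2}` and `M = X^{-1/2} Y X^{-1/2}`. The geodesic is
invariant under congruence, `(C X Cᵀ) #ₜ (C Y Cᵀ) = C (X #ₜ Y) Cᵀ`: indeed
`C X^{1/2} = (C X Cᵀ)^{1/2} W` with `W` orthogonal (both sides have Gram matrix `C X Cᵀ`), and
matrix powers commute with orthogonal conjugation. Taking `C = R` reduces the claim to
`Mˢ #ₜ Mᵘ`, where all factors are powers of `M` and commute:
`M^{s/2} M^{(u-s)t} M^{s/2} = M^{(1-t)s+tu}`.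
-/

open scoped MatrixOrder

lemma Matrix.continuousOn_spectrum {ι : Type*} [Fintype ι] [DecidableEq ι] (f : ℝ → ℝ)
    (A : Matrix ι ι ℝ) : ContinuousOn f (spectrum ℝ A) :=
  A.finite_spectrum.continuousOn f

variable {n : ℕ} {A : Matrix (Fin n) (Fin n) ℝ}

lemma mpow_eq_cfc (hA : A.IsHermitian) (t : ℝ) : mpow A t = cfc (· ^ t : ℝ → ℝ) A := by
  rw [hA.cfc_eq, IsHermitian.cfc, mpow, dif_pos hA, Unitary.conjStarAlgAut_apply]
  rfl

lemma isHermitian_mpow (hA : A.IsHermitian) (t : ℝ) : (mpow A t).IsHermitian := by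
  rw [mpow_eq_cfc hA]
  exact cfc_predicate _ A

lemma star_mpow (hA : A.IsHermitian) (t : ℝ) : star (mpow A t) = mpow A t :=
  (isHermitian_mpow hA t).eq

lemma mpow_zero (hA : A.IsHermitian) : mpow A 0 = 1 := by
  simp only [mpow_eq_cfc hA, Real.rpow_zero]
  exact cfc_const_one ℝ A

lemma mpow_one (hA : A.IsHermitian) : mpow A 1 = A := by
  simp only [mpow_eq_cfc hA, Real.rpow_one]
  exact cfc_id' ℝ A hA.isSelfAdjoint

lemma mpow_unitary_conj (hA : A.IsHermitian) {U : Matrix (Fin n) (Fin n) ℝ}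
    (hU : U ∈ unitaryGroup (Fin n) ℝ) (t : ℝ) :
    mpow (U * A * star U) t = U * mpow A t * star U := by
  have hUA : (U * A * star U).IsHermitian := by
    simpa only [star_eq_conjTranspose] using isHermitian_mul_mul_conjTranspose U hA
  have := StarAlgHomClass.map_cfc (Unitary.conjStarAlgAut ℝ _ ⟨U, hU⟩) (· ^ t : ℝ → ℝ)
    A (continuousOn_spectrum _ A) (by
      refine Continuous.congr (f := fun x => U * x * star U) (by fun_prop) fun x => ?_
      simp)
    hA.isSelfAdjoint (by simpa using hUA.isSelfAdjoint)
  simpa [mpow_eq_cfc hA, mpow_eq_cfc hUA] using this.symm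

lemma posDef_mpow (hA : A.PosDef) (t : ℝ) : (mpow A t).PosDef := by
  rw [mpow_eq_cfc hA.isHermitian, ← isStrictlyPositive_iff_posDef,
    cfc_isStrictlyPositive_iff _ A (continuousOn_spectrum _ A) hA.isHermitian.isSelfAdjoint]
  exact fun x hx => Real.rpow_pos_of_pos (hA.isStrictlyPositive.spectrum_pos hx) t

lemma mpow_mul_mpow (hA : A.PosDef) (a b : ℝ) : mpow A a * mpow A b = mpow A (a + b) := by
  simp only [mpow_eq_cfc hA.isHermitian]
  rw [← cfc_mul _ _ A (continuousOn_spectrum _ A) (continuousOn_spectrum _ A)]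
  exact cfc_congr fun x hx => (Real.rpow_add (hA.isStrictlyPositive.spectrum_pos hx) a b).symm

lemma mpow_mpow (hA : A.PosDef) (a b : ℝ) : mpow (mpow A a) b = mpow A (a * b) := by
  rw [mpow_eq_cfc (isHermitian_mpow hA.isHermitian a), mpow_eq_cfc hA.isHermitian,
    mpow_eq_cfc hA.isHermitian,
    ← cfc_comp _ _ A hA.isHermitian.isSelfAdjoint
      ((A.finite_spectrum.image _).continuousOn _) (continuousOn_spectrum _ A)]
  exact cfc_congr fun x hx => (Real.rpow_mul (hA.isStrictlyPositive.spectrum_pos hx).le a b).symm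

lemma mpow_neg_mul_mpow (hA : A.PosDef) (a : ℝ) : mpow A (-a) * mpow A a = 1 := by
  rw [mpow_mul_mpow hA, neg_add_cancel, mpow_zero hA.isHermitian]

lemma mpow_mul_mpow_neg (hA : A.PosDef) (a : ℝ) : mpow A a * mpow A (-a) = 1 := by
  rw [mpow_mul_mpow hA, add_neg_cancel, mpow_zero hA.isHermitian]

lemma mpow_half_mul_mpow_half (hA : A.PosDef) : mpow A (1/2) * mpow A (1/2) = A := by
  rw [mpow_mul_mpow hA, add_halves, mpow_one hA.isHermitian]

lemma geo_conj {X Y C : Matrix (Fin n) (Fin n) ℝ} (hX : X.PosDef) (hY : Y.IsHermitian)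
    (hC : IsUnit C) (t : ℝ) :
    geo (C * X * star C) (C * Y * star C) t = C * geo X Y t * star C := by
  set Z := C * X * star C
  have hZ : Z.PosDef := (IsUnit.posDef_star_right_conjugate_iff hC).2 hX
  have hXh := hX.isHermitian
  have hZh := hZ.isHermitian
  have hM : (mpow X (-(1/2)) * Y * mpow X (-(1/2))).IsHermitian := by
    simpa only [← star_eq_conjTranspose, star_mpow hXh] using
      isHermitian_mul_mul_conjTranspose (mpow X (-(1/2))) hY
  set W := mpow Z (-(1/2)) * C * mpow X (1/2)
  have hW : W ∈ unitaryGroup (Fin n) ℝ := by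
    rw [mem_unitaryGroup_iff]
    calc W * star W = mpow Z (-(1/2)) * (C * (mpow X (1/2) * mpow X (1/2)) * star C) *
          mpow Z (-(1/2)) := by
          simp only [W, star_mul, star_mpow hXh, star_mpow hZh, mul_assoc]
      _ = mpow Z (-(1/2)) * (mpow Z (1/2) * mpow Z (1/2)) * mpow Z (-(1/2)) := by
          rw [mpow_half_mul_mpow_half hX, mpow_half_mul_mpow_half hZ]
      _ = 1 := by
          rw [← mul_assoc, mpow_neg_mul_mpow hZ, one_mul, mpow_mul_mpow_neg hZ]
  have hZC : mpow Z (-(1/2)) * C = W * mpow X (-(1/2)) := by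
    simp only [W, mul_assoc, mpow_mul_mpow_neg hX, mul_one]
  have hZW : mpow Z (1/2) * W = C * mpow X (1/2) := by
    simp only [W, ← mul_assoc, mpow_mul_mpow_neg hZ, one_mul]
  calc geo Z (C * Y * star C) t
      = mpow Z (1/2) * mpow ((mpow Z (-(1/2)) * C) * Y * star (mpow Z (-(1/2)) * C)) t *
          mpow Z (1/2) := by
        simp only [geo, star_mul, star_mpow hZh, mul_assoc]
    _ = mpow Z (1/2) * mpow (W * (mpow X (-(1/2)) * Y * mpow X (-(1/2))) * star W) t *
          star (mpow Z (1/2)) := by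
        rw [hZC]
        simp only [star_mul, star_mpow hXh, star_mpow hZh, mul_assoc]
    _ = (mpow Z (1/2) * W) * mpow (mpow X (-(1/2)) * Y * mpow X (-(1/2))) t *
          star (mpow Z (1/2) * W) := by
        rw [mpow_unitary_conj hM hW, star_mul (mpow Z (1/2)) W]
        simp only [mul_assoc]
    _ = C * geo X Y t * star C := by
        simp only [hZW, geo, star_mul, star_mpow hXh, mul_assoc]

lemma geo_mpow_mpow (hA : A.PosDef) (s u t : ℝ) :
    geo (mpow A s) (mpow A u) t = mpow A ((1 - t) * s + t * u) := by
  simp only [geo, mpow_mpow hA, mpow_mul_mpow hA]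
  congr 1
  ring

theorem stmt18_general {n : ℕ} (X Y : Matrix (Fin n) (Fin n) ℝ)
    (hX : X.PosDef) (hY : Y.PosDef) (s u t : ℝ) :
    geo (geo X Y s) (geo X Y u) t = geo X Y ((1 - t) * s + t * u) := by
  set M := mpow X (-(1/2)) * Y * mpow X (-(1/2))
  have hM : M.PosDef := by
    simpa only [M, star_mpow hX.isHermitian] using
      (IsUnit.posDef_star_right_conjugate_iff (posDef_mpow hX (-(1/2))).isUnit).2 hY
  have hgeo (a : ℝ) : geo X Y a = mpow X (1/2) * mpow M a * star (mpow X (1/2)) := by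
    rw [geo, star_mpow hX.isHermitian]
  rw [hgeo, hgeo, hgeo, geo_conj (posDef_mpow hM s) (isHermitian_mpow hM.isHermitian u)
    (posDef_mpow hX (1/2)).isUnit, geo_mpow_mpow hM]

theorem stmt18 {n : ℕ} (X Y : Matrix (Fin n) (Fin n) ℝ)
    (hX : X.PosDef) (hY : Y.PosDef) (s u t : ℝ)
    (hs : s ∈ Set.Icc (0:ℝ) 1) (hu : u ∈ Set.Icc (0:ℝ) 1) (ht : t ∈ Set.Icc (0:ℝ) 1) :
    geo (geo X Y s) (geo X Y u) t = geo X Y ((1 - t) * s + t * u) :=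
  stmt18_general X Y hX hY s u t
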